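/- arXiv:1204.6633 — 5 statements merged into one kernel-verified Lean document; each statement's English description precedes it below -/
import Mathlib

section
/- Let z̃ : ℝ → ℂ be twice differentiable at a point α with z̃'(α) ≠ 0, and let g : ℂ → ℂ be holomorphic on a neighborhood of z̃(α) with g'(z̃(α)) ≠ 0 (and g twice complex differentiable there). Set z = g ∘ z̃ and Q = 1/|g'(z̃(α))|. Then z'(α) ≠ 0, and the curvatures satisfy κ_z(α) = Q·κ_{z̃}(α) + Q³·Im( conj(g'(z̃(α))) · g''(z̃(α)) · z̃'(α) ) / |z̃'(α)|. -/
open Complex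

/-- Curvature of a plane curve `w : ℝ → ℂ` at a parameter `α`:
`κ_w(α) = Im(conj(w'(α)) · w''(α)) / |w'(α)|³`. -/
noncomputable def curvature (w : ℝ → ℂ) (α : ℝ) : ℝ :=
  ((starRingEnd ℂ) (deriv w α) * deriv (deriv w) α).im / ‖deriv w α‖ ^ 3

open Filter Topology

/-! With `A = g'(z̃(α))`, `B = g''(z̃(α))`, `u = z̃'(α)`, `v = z̃''(α)`, the chain rule gives
`z' = A u` and `z'' = B u² + A v`. Then `conj(z') z'' = |u|² · conj(A) B u + |A|² · conj(u) v`,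
and dividing the imaginary part by `|z'|³ = |A|³ |u|³` splits it into the two terms. -/

section SecondOrderChainRule

variable {𝕜 𝕜' : Type*} [NontriviallyNormedField 𝕜] [NontriviallyNormedField 𝕜']
  [NormedAlgebra 𝕜 𝕜']

/-- `deriv` of a function is `0` wherever the function is not differentiable. -/
theorem eventually_differentiableAt_of_continuousAt_deriv {F : Type*} [NormedAddCommGroup F]
    [NormedSpace 𝕜 F] {f : 𝕜 → F} {x : 𝕜} (hcont : ContinuousAt (deriv f) x)
    (hne : deriv f x ≠ 0) : ∀ᶠ y in 𝓝 x, DifferentiableAt 𝕜 f y := by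
  filter_upwards [hcont.eventually_ne hne] with y hy
  by_contra hdiff
  exact hy (deriv_zero_of_not_differentiableAt hdiff)

theorem deriv_comp_eventuallyEq {f : 𝕜 → 𝕜'} {g : 𝕜' → 𝕜'} {x : 𝕜}
    (hf : ∀ᶠ y in 𝓝 x, DifferentiableAt 𝕜 f y) (hg : ∀ᶠ w in 𝓝 (f x), DifferentiableAt 𝕜' g w) :
    deriv (g ∘ f) =ᶠ[𝓝 x] fun y => deriv g (f y) * deriv f y := by
  have hg' : ∀ᶠ y in 𝓝 x, DifferentiableAt 𝕜' g (f y) :=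
    hf.self_of_nhds.continuousAt.eventually hg
  filter_upwards [hf, hg'] with y hfy hgy
  exact (hgy.hasDerivAt.comp y hfy.hasDerivAt).deriv

theorem hasDerivAt_deriv_comp {f : 𝕜 → 𝕜'} {g : 𝕜' → 𝕜'} {x : 𝕜}
    (hf : ∀ᶠ y in 𝓝 x, DifferentiableAt 𝕜 f y) (hg : ∀ᶠ w in 𝓝 (f x), DifferentiableAt 𝕜' g w)
    (hf2 : DifferentiableAt 𝕜 (deriv f) x) (hg2 : DifferentiableAt 𝕜' (deriv g) (f x)) :
    HasDerivAt (deriv (g ∘ f))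
      (deriv (deriv g) (f x) * deriv f x ^ 2 + deriv g (f x) * deriv (deriv f) x) x := by
  have hg'f : HasDerivAt (fun y => deriv g (f y)) (deriv (deriv g) (f x) * deriv f x) x :=
    hg2.hasDerivAt.comp x hf.self_of_nhds.hasDerivAt
  exact ((hg'f.mul hf2.hasDerivAt).congr_deriv (by ring)).congr_of_eventuallyEq
    (deriv_comp_eventuallyEq hf hg)

end SecondOrderChainRule

theorem im_conj_mul_second_deriv_comp (A B u v : ℂ) :
    (starRingEnd ℂ (A * u) * (B * u ^ 2 + A * v)).im =
      ‖u‖ ^ 2 * (starRingEnd ℂ A * B * u).im + ‖A‖ ^ 2 * (starRingEnd ℂ u * v).im := by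
  have hsplit : starRingEnd ℂ (A * u) * (B * u ^ 2 + A * v) =
      (starRingEnd ℂ u * u) * (starRingEnd ℂ A * B * u) +
        (starRingEnd ℂ A * A) * (starRingEnd ℂ u * v) := by
    rw [map_mul]; ring
  rw [hsplit, Complex.conj_mul', Complex.conj_mul', ← ofReal_pow, ← ofReal_pow, add_im,
    im_ofReal_mul, im_ofReal_mul]

theorem curvature_comp_conformal_general (zc : ℝ → ℂ) (α : ℝ) (g : ℂ → ℂ)
    (hz2 : DifferentiableAt ℝ (deriv zc) α)
    (hz' : deriv zc α ≠ 0)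
    (hg2 : DifferentiableAt ℂ (deriv g) (zc α))
    (hg' : deriv g (zc α) ≠ 0) :
    deriv (g ∘ zc) α ≠ 0 ∧
    curvature (g ∘ zc) α =
      (1 / ‖deriv g (zc α)‖) * curvature zc α +
        (1 / ‖deriv g (zc α)‖) ^ 3 *
          ((starRingEnd ℂ) (deriv g (zc α)) * deriv (deriv g) (zc α) * deriv zc α).im /
          ‖deriv zc α‖ := by
  have hz1 := eventually_differentiableAt_of_continuousAt_deriv hz2.continuousAt hz'
  have hg1 := eventually_differentiableAt_of_continuousAt_deriv hg2.continuousAt hg'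
  have hderiv1 : deriv (g ∘ zc) α = deriv g (zc α) * deriv zc α :=
    (deriv_comp_eventuallyEq hz1 hg1).self_of_nhds
  have hderiv2 := (hasDerivAt_deriv_comp hz1 hg1 hz2 hg2).deriv
  have hA : ‖deriv g (zc α)‖ ≠ 0 := norm_ne_zero_iff.mpr hg'
  have hu : ‖deriv zc α‖ ≠ 0 := norm_ne_zero_iff.mpr hz'
  refine ⟨hderiv1 ▸ mul_ne_zero hg' hz', ?_⟩
  rw [curvature, curvature, hderiv1, hderiv2, im_conj_mul_second_deriv_comp, norm_mul]
  field_simp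
  ring

theorem curvature_comp_conformal (zc : ℝ → ℂ) (α : ℝ) (g : ℂ → ℂ) (s : Set ℂ)
    (hs : IsOpen s) (hmem : zc α ∈ s)
    (hz1 : DifferentiableAt ℝ zc α)
    (hz2 : DifferentiableAt ℝ (deriv zc) α)
    (hz' : deriv zc α ≠ 0)
    (hg : ∀ w ∈ s, DifferentiableAt ℂ g w)
    (hg2 : DifferentiableAt ℂ (deriv g) (zc α))
    (hg' : deriv g (zc α) ≠ 0) :
    deriv (g ∘ zc) α ≠ 0 ∧
    curvature (g ∘ zc) α =
      (1 / ‖deriv g (zc α)‖) * curvature zc α +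
        (1 / ‖deriv g (zc α)‖) ^ 3 *
          ((starRingEnd ℂ) (deriv g (zc α)) * deriv (deriv g) (zc α) * deriv zc α).im /
          ‖deriv zc α‖ :=
  curvature_comp_conformal_general zc α g hz2 hz' hg2 hg'
end

section
/- Let z : ℝ × ℝ → ℝ², (α,t) ↦ z(α,t), be twice continuously differentiable, with z(α+2π, t) = z(α,t) + (2π, 0) for all α, t, and ∂_α z(α,t) ≠ 0 for all α, t. Then for every t, the function t ↦ ∫_{−π}^{π} |∂_α z(α,t)| dα is differentiable and d/dt ∫_{−π}^{π} |∂_α z(α,t)| dα = − ∫_{−π}^{π} ( ∂_α² z(α,t) · (∂_α z(α,t))^⊥ ) ( ∂_t z(α,t) · (∂_α z(α,t))^⊥ ) / |∂_α z(α,t)|³ dα. -/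
/-!
Differentiating under the integral sign, `∂_t |z_α| = (z_α · z_{αt}) / |z_α|`, and
`z_{αt} = ∂_α z_t` by symmetry of second derivatives. With `T = z_α / |z_α|` the unit tangent,
the product rule gives `∂_α z_t · T = ∂_α (z_t · T) - z_t · ∂_α T`, and in the plane
`∂_α T = (z_αα · z_α^⊥) z_α^⊥ / |z_α|³`. The exact derivative `∂_α (z_t · T)` integrates to zero
over a period because `z_t` and `z_α` are `2π`-periodic in `α`.
-/

open Real MeasureTheory

/-- Real inner product on `ℂ ≅ ℝ²`:  `u · v = Re(conj u · v)`. -/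
noncomputable def rdot (u v : ℂ) : ℝ := ((starRingEnd ℂ) u * v).re

/-- Rotation by `π/2`, i.e. `(a,b)^⊥ = (−b,a)` under the identification `ℂ ≅ ℝ²`. -/
def pperp (u : ℂ) : ℂ := Complex.I * u

open scoped RealInnerProductSpace

theorem rdot_eq_inner (u v : ℂ) : rdot u v = ⟪u, v⟫ := by
  rw [rdot, Complex.inner, mul_comm]

theorem inner_pperp_mul_inner_pperp (u v w : ℂ) :
    ⟪u, pperp w⟫ * ⟪v, pperp w⟫ = ‖w‖ ^ 2 * ⟪u, v⟫ - ⟪u, w⟫ * ⟪v, w⟫ := by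
  simp only [Complex.inner, pperp, Complex.sq_norm, Complex.normSq_apply, Complex.mul_re,
    Complex.mul_im, Complex.conj_re, Complex.conj_im, Complex.I_re, Complex.I_im]
  ring

@[fun_prop]
theorem continuous_pperp : Continuous pperp := continuous_const.mul continuous_id

theorem HasDerivAt.norm_of_ne_zero {F : Type*} [NormedAddCommGroup F] [InnerProductSpace ℝ F]
    {f : ℝ → F} {f' : F} {x : ℝ} (hf : HasDerivAt f f' x) (h0 : f x ≠ 0) :
    HasDerivAt (‖f ·‖) (⟪f x, f'⟫ / ‖f x‖) x := by
  have hsq : ‖f x‖ ^ 2 ≠ 0 := by positivity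
  convert hf.norm_sq.sqrt hsq using 1
  · simp [Real.sqrt_sq (norm_nonneg _)]
  · rw [Real.sqrt_sq (norm_nonneg _)]
    ring

theorem HasDerivAt.inner_div_norm {u v : ℝ → ℂ} {u' v' : ℂ} {x : ℝ} (hu : HasDerivAt u u' x)
    (hv : HasDerivAt v v' x) (hv0 : v x ≠ 0) :
    HasDerivAt (fun y => ⟪u y, v y⟫ / ‖v y‖)
      (⟪u', v x⟫ / ‖v x‖ + ⟪v', pperp (v x)⟫ * ⟪u x, pperp (v x)⟫ / ‖v x‖ ^ 3) x := by
  have hn : ‖v x‖ ≠ 0 := norm_ne_zero_iff.mpr hv0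
  refine ((hu.inner ℝ hv).div (hv.norm_of_ne_zero hv0) hn).congr_deriv ?_
  rw [inner_pperp_mul_inner_pperp, real_inner_comm (v x) v', real_inner_comm (u x) v']
  field_simp
  ring

section Partials

variable {E : Type*} [NormedAddCommGroup E] [NormedSpace ℝ E] {z : ℝ → ℝ → E}

theorem hasDerivAt_fst_of_differentiableAt {a s : ℝ}
    (hz : DifferentiableAt ℝ (fun p : ℝ × ℝ => z p.1 p.2) (a, s)) :
    HasDerivAt (fun x => z x s) (fderiv ℝ (fun p : ℝ × ℝ => z p.1 p.2) (a, s) (1, 0)) a := by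
  exact hz.hasFDerivAt.comp_hasDerivAt a ((hasDerivAt_id a).prodMk (hasDerivAt_const a s))

theorem hasDerivAt_snd_of_differentiableAt {a s : ℝ}
    (hz : DifferentiableAt ℝ (fun p : ℝ × ℝ => z p.1 p.2) (a, s)) :
    HasDerivAt (fun y => z a y) (fderiv ℝ (fun p : ℝ × ℝ => z p.1 p.2) (a, s) (0, 1)) s := by
  exact hz.hasFDerivAt.comp_hasDerivAt s ((hasDerivAt_const s a).prodMk (hasDerivAt_id s))

variable {m n : WithTop ℕ∞}

theorem ContDiff.hasDerivAt_deriv_fst (hz : ContDiff ℝ n (fun p : ℝ × ℝ => z p.1 p.2))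
    (hn : n ≠ 0) (x y : ℝ) : HasDerivAt (fun x => z x y) (deriv (fun x => z x y) x) x :=
  (hasDerivAt_fst_of_differentiableAt (hz.differentiable hn _)).differentiableAt.hasDerivAt

theorem ContDiff.hasDerivAt_deriv_snd (hz : ContDiff ℝ n (fun p : ℝ × ℝ => z p.1 p.2))
    (hn : n ≠ 0) (x y : ℝ) : HasDerivAt (fun y => z x y) (deriv (fun y => z x y) y) y :=
  (hasDerivAt_snd_of_differentiableAt (hz.differentiable hn _)).differentiableAt.hasDerivAt

theorem ContDiff.deriv_fst (hz : ContDiff ℝ n (fun p : ℝ × ℝ => z p.1 p.2)) (hmn : m + 1 ≤ n) :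
    ContDiff ℝ m (fun p : ℝ × ℝ => deriv (fun x => z x p.2) p.1) := by
  have hd := (hz.of_le (le_add_self.trans hmn)).differentiable one_ne_zero
  simp only [fun p : ℝ × ℝ => (hasDerivAt_fst_of_differentiableAt (hd p)).deriv]
  exact (hz.fderiv_right hmn).clm_apply contDiff_const

theorem ContDiff.deriv_snd (hz : ContDiff ℝ n (fun p : ℝ × ℝ => z p.1 p.2)) (hmn : m + 1 ≤ n) :
    ContDiff ℝ m (fun p : ℝ × ℝ => deriv (fun y => z p.1 y) p.2) := by
  have hd := (hz.of_le (le_add_self.trans hmn)).differentiable one_ne_zero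
  simp only [fun p : ℝ × ℝ => (hasDerivAt_snd_of_differentiableAt (hd p)).deriv]
  exact (hz.fderiv_right hmn).clm_apply contDiff_const

theorem ContDiff.continuous_deriv_fst (hz : ContDiff ℝ n (fun p : ℝ × ℝ => z p.1 p.2))
    (hn : 1 ≤ n) (y : ℝ) : Continuous (deriv fun x => z x y) :=
  (hz.deriv_fst (m := 0) (by simpa using hn)).continuous.comp (Continuous.prodMk_left y)

theorem ContDiff.deriv_snd_deriv_fst_comm (hz : ContDiff ℝ 2 (fun p : ℝ × ℝ => z p.1 p.2))
    (a s : ℝ) :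
    deriv (fun y => deriv (fun x => z x y) a) s = deriv (fun x => deriv (fun y => z x y) s) a := by
  set Z : ℝ × ℝ → E := fun p => z p.1 p.2
  have hd := hz.differentiable two_ne_zero
  have hd' := (hz.fderiv_right (m := 1) le_rfl).differentiable one_ne_zero
  have h₁ : deriv (fun y => deriv (fun x => z x y) a) s =
      fderiv ℝ (fderiv ℝ Z) (a, s) (0, 1) (1, 0) := by
    simp only [fun y => (hasDerivAt_fst_of_differentiableAt (hd (a, y))).deriv]
    exact ((hasDerivAt_snd_of_differentiableAt (z := fun a s => fderiv ℝ Z (a, s))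
      (hd' (a, s))).clm_apply (hasDerivAt_const _ _)).deriv.trans (by simp)
  have h₂ : deriv (fun x => deriv (fun y => z x y) s) a =
      fderiv ℝ (fderiv ℝ Z) (a, s) (1, 0) (0, 1) := by
    simp only [fun x => (hasDerivAt_snd_of_differentiableAt (hd (x, s))).deriv]
    exact ((hasDerivAt_fst_of_differentiableAt (z := fun a s => fderiv ℝ Z (a, s))
      (hd' (a, s))).clm_apply (hasDerivAt_const _ _)).deriv.trans (by simp)
  rw [h₁, h₂]
  exact hz.contDiffAt.isSymmSndFDerivAt (by simp) _ _

end Partials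

section Periodic

variable {E : Type*} [NormedAddCommGroup E] [NormedSpace ℝ E] {z : ℝ → ℝ → E} {T : ℝ} {c : E}

theorem periodic_deriv_fst (hper : ∀ x y, z (x + T) y = z x y + c) (y : ℝ) :
    Function.Periodic (deriv fun x => z x y) T := fun x => by
  rw [← deriv_comp_add_const]
  simp only [hper, deriv_add_const]

theorem periodic_deriv_snd (hper : ∀ x y, z (x + T) y = z x y + c) (y : ℝ) :
    Function.Periodic (fun x => deriv (fun y => z x y) y) T := fun x => by
  simp only [hper, deriv_add_const]

theorem Function.Periodic.intervalIntegral_deriv_eq_zero [CompleteSpace E] {g g' : ℝ → E}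
    (hg : Function.Periodic g T) (hderiv : ∀ x, HasDerivAt g (g' x) x) (a : ℝ)
    (hint : IntervalIntegrable g' volume a (a + T)) : ∫ x in a..a + T, g' x = 0 := by
  rw [intervalIntegral.integral_eq_sub_of_hasDerivAt (fun x _ => hderiv x) hint, hg a, sub_self]

end Periodic

theorem Function.Periodic.intervalIntegral_inner_deriv_div_norm_eq_neg {u v u' v' : ℝ → ℂ} {T : ℝ}
    (hu : Function.Periodic u T) (hv : Function.Periodic v T) (hu' : ∀ x, HasDerivAt u (u' x) x)
    (hv' : ∀ x, HasDerivAt v (v' x) x) (hcu' : Continuous u') (hcv' : Continuous v')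
    (hv0 : ∀ x, v x ≠ 0) (a : ℝ) :
    ∫ x in a..a + T, ⟪u' x, v x⟫ / ‖v x‖ =
      -∫ x in a..a + T, ⟪v' x, pperp (v x)⟫ * ⟪u x, pperp (v x)⟫ / ‖v x‖ ^ 3 := by
  have hcu : Continuous u := continuous_iff_continuousAt.2 fun x => (hu' x).continuousAt
  have hcv : Continuous v := continuous_iff_continuousAt.2 fun x => (hv' x).continuousAt
  have hnorm0 : ∀ x, ‖v x‖ ≠ 0 := fun x => norm_ne_zero_iff.2 (hv0 x)
  have hc₁ : Continuous fun x => ⟪u' x, v x⟫ / ‖v x‖ := by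
    fun_prop (disch := exact hnorm0)
  have hc₂ : Continuous fun x => ⟪v' x, pperp (v x)⟫ * ⟪u x, pperp (v x)⟫ / ‖v x‖ ^ 3 := by
    fun_prop (disch := exact fun x => pow_ne_zero 3 (hnorm0 x))
  have hperiodic : Function.Periodic (fun x => ⟪u x, v x⟫ / ‖v x‖) T := fun x => by
    simp only [hu x, hv x]
  have hvanish := hperiodic.intervalIntegral_deriv_eq_zero
    (fun x => (hu' x).inner_div_norm (hv' x) (hv0 x)) a ((hc₁.add hc₂).intervalIntegrable _ _)
  rw [intervalIntegral.integral_add (hc₁.intervalIntegrable _ _)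
    (hc₂.intervalIntegrable _ _)] at hvanish
  linear_combination hvanish

theorem hasDerivAt_intervalIntegral_norm {F : Type*} [NormedAddCommGroup F]
    [InnerProductSpace ℝ F] {w : ℝ → ℝ → F} (hw : ContDiff ℝ 1 (fun p : ℝ × ℝ => w p.1 p.2))
    (hw0 : ∀ x s, w x s ≠ 0) (a b t : ℝ) :
    HasDerivAt (fun s => ∫ x in a..b, ‖w x s‖)
      (∫ x in a..b, ⟪w x t, deriv (fun s => w x s) t⟫ / ‖w x t‖) t := by
  set w' : ℝ → ℝ → F := fun x s => deriv (fun s => w x s) s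
  have hwc : Continuous (fun p : ℝ × ℝ => w p.1 p.2) := hw.continuous
  have hw'c : Continuous (fun p : ℝ × ℝ => w' p.1 p.2) :=
    (hw.deriv_snd (m := 0) (by simp)).continuous
  obtain ⟨C, hC⟩ := (isCompact_uIcc.prod (isCompact_closedBall t 1)).exists_bound_of_continuousOn
    hw'c.continuousOn
  have hbound : ∀ x s, ‖⟪w x s, w' x s⟫ / ‖w x s‖‖ ≤ ‖w' x s‖ := fun x s => by
    rw [Real.norm_eq_abs, abs_div, abs_norm, div_le_iff₀ (norm_pos_iff.2 (hw0 x s)), mul_comm]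
    exact abs_real_inner_le_norm _ _
  refine (intervalIntegral.hasDerivAt_integral_of_dominated_loc_of_deriv_le
    (F := fun s x => ‖w x s‖) (F' := fun s x => ⟪w x s, w' x s⟫ / ‖w x s‖) (μ := volume)
    (bound := fun _ => C) (Metric.ball_mem_nhds t one_pos) ?_ ?_ ?_ ?_
    intervalIntegrable_const ?_).2
  · exact .of_forall fun s => (hwc.uncurry_right s).norm.aestronglyMeasurable
  · exact (hwc.uncurry_right t).norm.intervalIntegrable _ _
  · exact ((hwc.uncurry_right t).inner (hw'c.uncurry_right t)).div
      (hwc.uncurry_right t).norm (fun x => norm_ne_zero_iff.2 (hw0 x t)) |>.aestronglyMeasurable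
  · exact .of_forall fun x hx s hs => (hbound x s).trans
      (hC (x, s) ⟨Set.uIoc_subset_uIcc hx, Metric.ball_subset_closedBall hs⟩)
  · exact .of_forall fun x _ s _ =>
      (hw.hasDerivAt_deriv_snd one_ne_zero x s).norm_of_ne_zero (hw0 x s)

/-- Time derivative of the surface-tension energy `∫ |∂_α z| dα` of a horizontally
`2π`-periodic interface: it equals
`−∫ (∂_α² z · ∂_α z^⊥)(∂_t z · ∂_α z^⊥)/|∂_α z|³ dα`. -/
theorem deriv_length_energy (z : ℝ → ℝ → ℂ)
    (hz : ContDiff ℝ 2 (fun p : ℝ × ℝ => z p.1 p.2))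
    (hper : ∀ α t : ℝ, z (α + 2 * π) t = z α t + 2 * π)
    (hza : ∀ α t : ℝ, deriv (fun a => z a t) α ≠ 0) (t : ℝ) :
    HasDerivAt (fun s => ∫ α in (-π)..π, ‖deriv (fun a => z a s) α‖)
      (-∫ α in (-π)..π,
        rdot (deriv (fun a => deriv (fun a' => z a' t) a) α) (pperp (deriv (fun a => z a t) α)) *
          rdot (deriv (fun s => z α s) t) (pperp (deriv (fun a => z a t) α)) /
          ‖deriv (fun a => z a t) α‖ ^ 3) t := by
  set zα : ℝ → ℝ → ℂ := fun x s => deriv (fun a => z a s) x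
  set zt : ℝ → ℝ → ℂ := fun x s => deriv (fun s => z x s) s
  have hzα : ContDiff ℝ 1 (fun p : ℝ × ℝ => zα p.1 p.2) := hz.deriv_fst (by norm_num)
  have hzt : ContDiff ℝ 1 (fun p : ℝ × ℝ => zt p.1 p.2) := hz.deriv_snd (by norm_num)
  have hparts := Function.Periodic.intervalIntegral_inner_deriv_div_norm_eq_neg
    (periodic_deriv_snd hper t) (periodic_deriv_fst hper t)
    (fun x => hzt.hasDerivAt_deriv_fst one_ne_zero x t)
    (fun x => hzα.hasDerivAt_deriv_fst one_ne_zero x t)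
    (hzt.continuous_deriv_fst le_rfl t) (hzα.continuous_deriv_fst le_rfl t) (fun x => hza x t) (-π)
  rw [show -π + 2 * π = π by ring] at hparts
  have hsymm : ∀ x, ⟪zα x t, deriv (fun s => zα x s) t⟫ = ⟪deriv (fun x => zt x t) x, zα x t⟫ :=
    fun x => by rw [real_inner_comm, hz.deriv_snd_deriv_fst_comm]
  simp only [rdot_eq_inner]
  refine (hasDerivAt_intervalIntegral_norm hzα hza (-π) π t).congr_deriv ?_
  simp only [hsymm]
  exact hparts
end

section
/- Let z = (z₁, z₂) : ℝ × ℝ → ℝ², (α,t) ↦ z(α,t), be twice continuously differentiable, with z₁(α+2π,t) = z₁(α,t) + 2π and z₂(α+2π,t) = z₂(α,t) for all α, t. Then for every t, d/dt [ (1/2) ∫_{−π}^{π} z₂(α,t)² ∂_α z₁(α,t) dα ] = ∫_{−π}^{π} z₂(α,t) ( ∂_t z(α,t) · (∂_α z(α,t))^⊥ ) dα, where (a,b)^⊥ = (−b, a). -/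
/-!
Differentiating under the integral sign, the derivative of the potential energy is
`∫ z₂ ∂_t z₂ ∂_α z₁ + ½ z₂² ∂_t ∂_α z₁`. Exchanging the mixed partials,
`½ z₂² ∂_α ∂_t z₁ = ∂_α (½ z₂² ∂_t z₁) - z₂ ∂_α z₂ ∂_t z₁`, and the exact term integrates to zero
over a period: `z₂` is `2π`-periodic in `α`, and so is `∂_t z₁` because
`z₁(α + 2π, t) - z₁(α, t)` does not depend on `t`.
-/

open Real MeasureTheory Function

variable {E : Type*} [NormedAddCommGroup E] [NormedSpace ℝ E]

noncomputable def partialFst (f : ℝ → ℝ → E) (a s : ℝ) : E := deriv (fun a => f a s) a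

noncomputable def partialSnd (f : ℝ → ℝ → E) (a s : ℝ) : E := deriv (f a) s

section PartialDerivatives

variable {f : ℝ → ℝ → E} {a s : ℝ}

theorem hasDerivAt_fderiv_fst (hf : DifferentiableAt ℝ (uncurry f) (a, s)) :
    HasDerivAt (fun a => f a s) (fderiv ℝ (uncurry f) (a, s) (1, 0)) a :=
  hf.hasFDerivAt.comp_hasDerivAt (f := fun a => (a, s)) a
    ((hasDerivAt_id a).prodMk (hasDerivAt_const a s))

theorem hasDerivAt_fderiv_snd (hf : DifferentiableAt ℝ (uncurry f) (a, s)) :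
    HasDerivAt (f a) (fderiv ℝ (uncurry f) (a, s) (0, 1)) s :=
  hf.hasFDerivAt.comp_hasDerivAt (f := fun s => (a, s)) s
    ((hasDerivAt_const s a).prodMk (hasDerivAt_id s))

theorem partialFst_eq_fderiv (hf : DifferentiableAt ℝ (uncurry f) (a, s)) :
    partialFst f a s = fderiv ℝ (uncurry f) (a, s) (1, 0) :=
  (hasDerivAt_fderiv_fst hf).deriv

theorem partialSnd_eq_fderiv (hf : DifferentiableAt ℝ (uncurry f) (a, s)) :
    partialSnd f a s = fderiv ℝ (uncurry f) (a, s) (0, 1) :=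
  (hasDerivAt_fderiv_snd hf).deriv

theorem hasDerivAt_partialFst (hf : DifferentiableAt ℝ (uncurry f) (a, s)) :
    HasDerivAt (fun a => f a s) (partialFst f a s) a :=
  (hasDerivAt_fderiv_fst hf).differentiableAt.hasDerivAt

theorem hasDerivAt_partialSnd (hf : DifferentiableAt ℝ (uncurry f) (a, s)) :
    HasDerivAt (f a) (partialSnd f a s) s :=
  (hasDerivAt_fderiv_snd hf).differentiableAt.hasDerivAt

theorem uncurry_partialFst (hf : Differentiable ℝ (uncurry f)) :
    uncurry (partialFst f) = fun p => fderiv ℝ (uncurry f) p (1, 0) :=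
  funext fun _ => partialFst_eq_fderiv (hf _)

theorem uncurry_partialSnd (hf : Differentiable ℝ (uncurry f)) :
    uncurry (partialSnd f) = fun p => fderiv ℝ (uncurry f) p (0, 1) :=
  funext fun _ => partialSnd_eq_fderiv (hf _)

theorem ContDiff.partialFst {n : WithTop ℕ∞} (hf : ContDiff ℝ (n + 1) (uncurry f)) :
    ContDiff ℝ n (uncurry (partialFst f)) := by
  rw [uncurry_partialFst (hf.differentiable (by simp))]
  exact (hf.fderiv_right le_rfl).clm_apply contDiff_const

theorem ContDiff.partialSnd {n : WithTop ℕ∞} (hf : ContDiff ℝ (n + 1) (uncurry f)) :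
    ContDiff ℝ n (uncurry (partialSnd f)) := by
  rw [uncurry_partialSnd (hf.differentiable (by simp))]
  exact (hf.fderiv_right le_rfl).clm_apply contDiff_const

theorem fderiv_fderiv_apply {V : Type*} [NormedAddCommGroup V] [NormedSpace ℝ V] {F : V → E}
    {x : V} (hF : DifferentiableAt ℝ (fderiv ℝ F) x) (v w : V) :
    fderiv ℝ (fun y => fderiv ℝ F y v) x w = fderiv ℝ (fderiv ℝ F) x w v := by
  rw [fderiv_clm_apply hF (differentiableAt_const v)]
  simp

theorem partialSnd_partialFst (hf : ContDiff ℝ 2 (uncurry f)) (a s : ℝ) :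
    partialSnd (partialFst f) a s = partialFst (partialSnd f) a s := by
  have hd : Differentiable ℝ (uncurry f) := hf.differentiable (by simp)
  have hdd := (hf.fderiv_right (m := 1) le_rfl).differentiable one_ne_zero
  rw [partialSnd_eq_fderiv ((hf.partialFst (n := 1)).differentiable one_ne_zero _),
    partialFst_eq_fderiv ((hf.partialSnd (n := 1)).differentiable one_ne_zero _),
    uncurry_partialFst hd, uncurry_partialSnd hd, fderiv_fderiv_apply (hdd _),
    fderiv_fderiv_apply (hdd _)]
  exact hf.contDiffAt.isSymmSndFDerivAt (by simp) _ _

theorem periodic_partialSnd_of_add_const {T : ℝ} {c : E} (hf : ∀ a s, f (a + T) s = f a s + c)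
    (s : ℝ) : Periodic (fun a => partialSnd f a s) T := fun a => by
  simp only [partialSnd, funext (hf a), deriv_add_const]

end PartialDerivatives

theorem hasDerivAt_intervalIntegral_of_continuous {f f' : ℝ → ℝ → E}
    (hf : Continuous (uncurry f)) (hf' : Continuous (uncurry f'))
    (hderiv : ∀ x s, HasDerivAt (f x) (f' x s) s) (a b t : ℝ) :
    HasDerivAt (fun s => ∫ x in a..b, f x s) (∫ x in a..b, f' x t) t := by
  obtain ⟨C, hC⟩ := (isCompact_uIcc.prod (isCompact_closedBall t 1)).exists_bound_of_continuousOn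
    hf'.continuousOn
  exact (intervalIntegral.hasDerivAt_integral_of_dominated_loc_of_deriv_le
    (F := fun s x => f x s) (F' := fun s x => f' x s) (bound := fun _ => C)
    (Metric.ball_mem_nhds t one_pos)
    (.of_forall fun s => (hf.uncurry_right s).aestronglyMeasurable)
    ((hf.uncurry_right t).intervalIntegrable _ _)
    (hf'.uncurry_right t).aestronglyMeasurable
    (.of_forall fun x hx s hs =>
      hC (x, s) ⟨Set.uIoc_subset_uIcc hx, Metric.ball_subset_closedBall hs⟩)
    intervalIntegrable_const
    (.of_forall fun x _ s _ => hderiv x s)).2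

section PotentialEnergy

variable {f g : ℝ → ℝ → ℝ}

theorem hasDerivAt_integral_sq_mul_partialFst (hf : ContDiff ℝ 2 (uncurry f))
    (hg : ContDiff ℝ 1 (uncurry g)) (a b t : ℝ) :
    HasDerivAt (fun s => ∫ α in a..b, g α s ^ 2 * partialFst f α s)
      (∫ α in a..b, 2 * g α t * partialSnd g α t * partialFst f α t +
        g α t ^ 2 * partialFst (partialSnd f) α t) t := by
  have hPf := hf.partialFst (n := 1)
  refine hasDerivAt_intervalIntegral_of_continuous
    (f := fun α s => g α s ^ 2 * partialFst f α s)
    (f' := fun α s => 2 * g α s * partialSnd g α s * partialFst f α s +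
      g α s ^ 2 * partialFst (partialSnd f) α s) ?_ ?_ (fun α s => ?_) _ _ _
  · exact (hg.continuous.pow 2).mul hPf.continuous
  · exact (((continuous_const.mul hg.continuous).mul (hg.partialSnd (n := 0)).continuous).mul
      hPf.continuous).add
      ((hg.continuous.pow 2).mul (hf.partialSnd.partialFst (n := 0)).continuous)
  · refine (((hasDerivAt_partialSnd (hg.differentiable one_ne_zero (α, s))).fun_pow 2).fun_mul
      (hasDerivAt_partialSnd (hPf.differentiable one_ne_zero (α, s)))).congr_deriv ?_
    rw [partialSnd_partialFst hf]
    norm_num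

theorem integral_partialFst_half_sq_mul_partialSnd_eq_zero (hf : ContDiff ℝ 2 (uncurry f))
    (hg : ContDiff ℝ 1 (uncurry g)) {T c : ℝ} (hf_per : ∀ α s, f (α + T) s = f α s + c)
    (hg_per : ∀ α s, g (α + T) s = g α s) (a t : ℝ) :
    ∫ α in a..a + T, (g α t * partialFst g α t * partialSnd f α t +
      1 / 2 * g α t ^ 2 * partialFst (partialSnd f) α t) = 0 := by
  have hQf := hf.partialSnd (n := 1)
  have hper : Periodic (fun α => 1 / 2 * g α t ^ 2 * partialSnd f α t) T :=
    ((show Periodic (fun α => g α t) T from (hg_per · t)).comp fun x => 1 / 2 * x ^ 2).mul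
      (periodic_partialSnd_of_add_const hf_per t)
  have hderiv : ∀ α, HasDerivAt (fun α => 1 / 2 * g α t ^ 2 * partialSnd f α t)
      (g α t * partialFst g α t * partialSnd f α t +
        1 / 2 * g α t ^ 2 * partialFst (partialSnd f) α t) α := fun α =>
    ((((hasDerivAt_partialFst (hg.differentiable one_ne_zero (α, t))).fun_pow 2).const_mul
      _).fun_mul (hasDerivAt_partialFst (hQf.differentiable one_ne_zero (α, t)))).congr_deriv
      (by ring)
  have cg := hg.continuous.uncurry_right t
  have cPg := (hg.partialFst (n := 0)).continuous.uncurry_right t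
  have cQf := hQf.continuous.uncurry_right t
  have cPQf := (hQf.partialFst (n := 0)).continuous.uncurry_right t
  rw [intervalIntegral.integral_eq_sub_of_hasDerivAt (fun α _ => hderiv α)
    (Continuous.intervalIntegrable (by fun_prop) _ _)]
  exact sub_eq_zero.mpr (hper a)

end PotentialEnergy

/-- Time derivative of the potential energy `(1/2)∫ z₂² ∂_α z₁ dα` of a horizontally
`2π`-periodic interface `z = (z₁, z₂)`: it equals `∫ z₂ (∂_t z · ∂_α z^⊥) dα`,
where `(a,b)^⊥ = (−b,a)`. -/
theorem deriv_potential_energy (z₁ z₂ : ℝ → ℝ → ℝ)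
    (h1 : ContDiff ℝ 2 (fun p : ℝ × ℝ => z₁ p.1 p.2))
    (h2 : ContDiff ℝ 2 (fun p : ℝ × ℝ => z₂ p.1 p.2))
    (hper1 : ∀ α t : ℝ, z₁ (α + 2 * π) t = z₁ α t + 2 * π)
    (hper2 : ∀ α t : ℝ, z₂ (α + 2 * π) t = z₂ α t) (t : ℝ) :
    HasDerivAt (fun s => (1 / 2) * ∫ α in (-π)..π, (z₂ α s) ^ 2 * deriv (fun a => z₁ a s) α)
      (∫ α in (-π)..π, z₂ α t *
        (deriv (fun s => z₁ α s) t * (-(deriv (fun a => z₂ a t) α)) +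
          deriv (fun s => z₂ α s) t * deriv (fun a => z₁ a t) α)) t := by
  change ContDiff ℝ 2 (uncurry z₁) at h1
  change ContDiff ℝ 2 (uncurry z₂) at h2
  change HasDerivAt (fun s => (1 / 2) * ∫ α in (-π)..π, z₂ α s ^ 2 * partialFst z₁ α s)
    (∫ α in (-π)..π, z₂ α t * (partialSnd z₁ α t * -partialFst z₂ α t +
      partialSnd z₂ α t * partialFst z₁ α t)) t
  have h2' : ContDiff ℝ 1 (uncurry z₂) := h2.of_le one_le_two
  have hexact := integral_partialFst_half_sq_mul_partialSnd_eq_zero h1 h2' hper1 hper2 (-π) t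
  rw [show -π + 2 * π = π by ring] at hexact
  have c₂ := h2.continuous.uncurry_right t
  have cP₁ := (h1.partialFst (n := 1)).continuous.uncurry_right t
  have cQ₁ := (h1.partialSnd (n := 1)).continuous.uncurry_right t
  have cP₂ := (h2.partialFst (n := 1)).continuous.uncurry_right t
  have cQ₂ := (h2.partialSnd (n := 1)).continuous.uncurry_right t
  have cPQ₁ := (h1.partialSnd.partialFst (n := 0)).continuous.uncurry_right t
  refine ((hasDerivAt_integral_sq_mul_partialFst h1 h2' (-π) π t).const_mul
    (1 / 2)).congr_deriv ?_
  rw [← intervalIntegral.integral_const_mul, ← sub_eq_zero, ← intervalIntegral.integral_sub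
    (Continuous.intervalIntegrable (by fun_prop) _ _)
    (Continuous.intervalIntegrable (by fun_prop) _ _)]
  refine (intervalIntegral.integral_congr fun α _ => ?_).trans hexact
  ring
end

section
/- Let φ : ℝ → ℝ be a smooth, compactly supported function, and for δ > 0 set φ_δ(x) = δ⁻¹ φ(x/δ). There exists a constant C, depending only on φ, such that for every δ > 0, every continuously differentiable compactly supported f : ℝ → ℝ, and every bounded continuously differentiable g : ℝ → ℝ with bounded derivative, ‖ φ_δ * (f'·g) − g·(φ_δ * f') ‖_{L²(ℝ)} ≤ C · (sup_{x} |g'(x)|) · ‖f‖_{L²(ℝ)}. -/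
/-!
Integrating by parts in `y`, the commutator at `x` is
`∫ f(y) ∂_y[φ_δ(x - y) (g(x) - g(y))] dy`. Since `|g(y) - g(x)| ≤ ‖g'‖_∞ |x - y|`, the
derivative is bounded by `‖g'‖_∞ K_δ(x - y)` with `K(u) = |u φ'(u)| + |φ(u)|`, and `K_δ` is the
`L¹`-normalised dilate of `K`, so `∫ K_δ = ∫ K` for every `δ`. Young's inequality
`‖K_δ * |f|‖₂ ≤ ‖K_δ‖₁ ‖f‖₂` concludes.
-/

open Real MeasureTheory
open scoped ENNReal

/-- Convolution of two functions on `ℝ`. -/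
noncomputable def convol (f g : ℝ → ℝ) (x : ℝ) : ℝ := ∫ y, f (x - y) * g y

theorem ENNReal.lintegral_mul_sq_le {α : Type*} [MeasurableSpace α] {μ : Measure α}
    {k F : α → ℝ≥0∞} (hk : AEMeasurable k μ) (hF : AEMeasurable F μ) :
    (∫⁻ a, k a * F a ∂μ) ^ 2 ≤ (∫⁻ a, k a ∂μ) * ∫⁻ a, k a * F a ^ 2 ∂μ := by
  have hsplit : ∀ a, k a * F a = k a ^ (2⁻¹ : ℝ) * (k a * F a ^ 2) ^ (2⁻¹ : ℝ) := fun a => by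
    rw [ENNReal.mul_rpow_of_nonneg _ _ (by norm_num), ← mul_assoc,
      ← ENNReal.rpow_add_of_nonneg _ _ (by norm_num) (by norm_num), ← ENNReal.rpow_two,
      ← ENNReal.rpow_mul]
    norm_num
  have hHolder := ENNReal.lintegral_mul_norm_pow_le hk (hk.mul (hF.pow_const 2))
    (p := 2⁻¹) (q := 2⁻¹) (by norm_num) (by norm_num) (by norm_num)
  calc (∫⁻ a, k a * F a ∂μ) ^ 2
      ≤ ((∫⁻ a, k a ∂μ) ^ (2⁻¹ : ℝ) * (∫⁻ a, k a * F a ^ 2 ∂μ) ^ (2⁻¹ : ℝ)) ^ 2 := by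
        gcongr
        exact (lintegral_congr hsplit).trans_le hHolder
    _ = (∫⁻ a, k a ∂μ) * ∫⁻ a, k a * F a ^ 2 ∂μ := by
      rw [mul_pow, ← ENNReal.rpow_mul_natCast, ← ENNReal.rpow_mul_natCast]
      norm_num

section Young

variable {G : Type*} [MeasurableSpace G] [AddGroup G] [MeasurableAdd₂ G] [MeasurableNeg G]
  {μ : Measure G} [SFinite μ] [μ.IsAddLeftInvariant] {k F : G → ℝ≥0∞}

theorem lintegral_lconvolution_sq_le (hk : Measurable k) (hF : Measurable F) :
    ∫⁻ x, (k ⋆ₗ[μ] F) x ^ 2 ∂μ ≤ (∫⁻ y, k y ∂μ) ^ 2 * ∫⁻ x, F x ^ 2 ∂μ := by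
  have hmeas : Measurable (Function.uncurry fun x y : G => k y * F (-y + x) ^ 2) :=
    (hk.comp measurable_snd).mul ((hF.comp (measurable_snd.neg.add measurable_fst)).pow_const 2)
  calc ∫⁻ x, (k ⋆ₗ[μ] F) x ^ 2 ∂μ
      ≤ ∫⁻ x, (∫⁻ y, k y ∂μ) * ∫⁻ y, k y * F (-y + x) ^ 2 ∂μ ∂μ :=
        lintegral_mono fun x => ENNReal.lintegral_mul_sq_le hk.aemeasurable
          (hF.comp (measurable_neg.add_const x)).aemeasurable
    _ = (∫⁻ y, k y ∂μ) * ∫⁻ y, ∫⁻ x, k y * F (-y + x) ^ 2 ∂μ ∂μ := by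
        rw [lintegral_const_mul _ hmeas.lintegral_prod_right,
          lintegral_lintegral_swap hmeas.aemeasurable]
    _ = (∫⁻ y, k y ∂μ) * ∫⁻ y, k y * ∫⁻ x, F x ^ 2 ∂μ ∂μ := by
        congr 1
        refine lintegral_congr fun y => ?_
        have hFy : Measurable fun x => F (-y + x) ^ 2 :=
          (hF.comp (measurable_const_add (-y))).pow_const 2
        rw [lintegral_const_mul _ hFy,
          lintegral_add_left_eq_self (fun x => F x ^ 2) (-y)]
    _ = (∫⁻ y, k y ∂μ) ^ 2 * ∫⁻ x, F x ^ 2 ∂μ := by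
        rw [lintegral_mul_const _ hk, ← mul_assoc, sq]

theorem eLpNorm_lconvolution_le (hk : Measurable k) (hF : Measurable F) :
    eLpNorm (k ⋆ₗ[μ] F) 2 μ ≤ (∫⁻ y, k y ∂μ) * eLpNorm F 2 μ := by
  simp only [eLpNorm_eq_lintegral_rpow_enorm_toReal two_ne_zero ENNReal.ofNat_ne_top,
    enorm_eq_self, ENNReal.toReal_ofNat, ENNReal.rpow_two]
  calc (∫⁻ x, (k ⋆ₗ[μ] F) x ^ 2 ∂μ) ^ (1 / 2 : ℝ)
      ≤ ((∫⁻ y, k y ∂μ) ^ 2 * ∫⁻ x, F x ^ 2 ∂μ) ^ (1 / 2 : ℝ) := by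
        gcongr; exact lintegral_lconvolution_sq_le hk hF
    _ = (∫⁻ y, k y ∂μ) * (∫⁻ x, F x ^ 2 ∂μ) ^ (1 / 2 : ℝ) := by
        rw [ENNReal.mul_rpow_of_nonneg _ _ (by norm_num), ← ENNReal.rpow_natCast_mul]
        norm_num

end Young

noncomputable def commutatorKernel (ψ : ℝ → ℝ) (u : ℝ) : ℝ := |u * deriv ψ u| + |ψ u|

theorem convol_mul_sub_mul_convol_eq_integral {ψ f g : ℝ → ℝ} (hψ : ContDiff ℝ 1 ψ)
    (hf : ContDiff ℝ 1 f) (hfc : HasCompactSupport f) (hg : ContDiff ℝ 1 g) (x : ℝ) :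
    convol ψ (fun y => deriv f y * g y) x - g x * convol ψ (deriv f) x
      = ∫ y, f y * (deriv ψ (x - y) * (g y - g x) - ψ (x - y) * deriv g y) := by
  set v : ℝ → ℝ := fun y => ψ (x - y) * (g y - g x)
  set v' : ℝ → ℝ := fun y => -deriv ψ (x - y) * (g y - g x) + ψ (x - y) * deriv g y
  have hv : ∀ y, HasDerivAt v (v' y) y := fun y => by
    have hψ' := (hψ.differentiable one_ne_zero (x - y)).hasDerivAt.comp y
      ((hasDerivAt_id y).const_sub x)
    have hg' := ((hg.differentiable one_ne_zero y).hasDerivAt).sub_const (g x)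
    exact (hψ'.mul hg').congr_deriv (by simp only [v', Function.comp_apply]; ring)
  have hv_cont : Continuous v :=
    (hψ.continuous.comp (continuous_const.sub continuous_id)).mul
      (hg.continuous.sub continuous_const)
  have hv'_cont : Continuous v' :=
    (((hψ.continuous_deriv le_rfl).comp (continuous_const.sub continuous_id)).neg.mul
      (hg.continuous.sub continuous_const)).add
      ((hψ.continuous.comp (continuous_const.sub continuous_id)).mul
        (hg.continuous_deriv le_rfl))
  have hf'_cont : Continuous (deriv f) := hf.continuous_deriv le_rfl
  have hf'c : HasCompactSupport (deriv f) := hfc.deriv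
  have hkernel : Continuous fun y => ψ (x - y) :=
    hψ.continuous.comp (continuous_const.sub continuous_id)
  have hIBP : ∫ y, f y * v' y = -∫ y, deriv f y * v y :=
    integral_mul_deriv_eq_deriv_mul_of_integrable
      (fun y _ => (hf.differentiable one_ne_zero y).hasDerivAt) (fun y _ => hv y)
      ((hf.continuous.mul hv'_cont).integrable_of_hasCompactSupport hfc.mul_right)
      ((hf'_cont.mul hv_cont).integrable_of_hasCompactSupport hf'c.mul_right)
      ((hf.continuous.mul hv_cont).integrable_of_hasCompactSupport hfc.mul_right)
  calc convol ψ (fun y => deriv f y * g y) x - g x * convol ψ (deriv f) x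
      = ∫ y, (ψ (x - y) * (deriv f y * g y) - g x * (ψ (x - y) * deriv f y)) := by
        rw [convol, convol, ← integral_const_mul, ← integral_sub]
        · exact (hkernel.mul (hf'_cont.mul hg.continuous)).integrable_of_hasCompactSupport
            hf'c.mul_right.mul_left
        · exact ((hkernel.mul hf'_cont).integrable_of_hasCompactSupport
            hf'c.mul_left).const_mul _
    _ = ∫ y, deriv f y * v y := by
        congr 1; ext y; simp only [v]; ring
    _ = -∫ y, f y * v' y := by rw [hIBP, neg_neg]
    _ = ∫ y, f y * (deriv ψ (x - y) * (g y - g x) - ψ (x - y) * deriv g y) := by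
        rw [← integral_neg]
        congr 1; ext y; simp only [v']; ring

theorem abs_deriv_mul_sub_mul_deriv_le {ψ g : ℝ → ℝ} {L : ℝ} (hg : Differentiable ℝ g)
    (hgL : ∀ y, |deriv g y| ≤ L) (x y : ℝ) :
    |deriv ψ (x - y) * (g y - g x) - ψ (x - y) * deriv g y|
      ≤ L * commutatorKernel ψ (x - y) := by
  have hlip : |g y - g x| ≤ L * |x - y| := by
    simpa only [Real.norm_eq_abs, abs_sub_comm y] using
      Convex.norm_image_sub_le_of_norm_deriv_le (fun z _ => hg z) (fun z _ => hgL z)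
        convex_univ (Set.mem_univ x) (Set.mem_univ y)
  calc |deriv ψ (x - y) * (g y - g x) - ψ (x - y) * deriv g y|
      ≤ |deriv ψ (x - y)| * |g y - g x| + |ψ (x - y)| * |deriv g y| := by
        rw [← abs_mul, ← abs_mul]; exact abs_sub _ _
    _ ≤ |deriv ψ (x - y)| * (L * |x - y|) + |ψ (x - y)| * L := by gcongr; exact hgL y
    _ = L * commutatorKernel ψ (x - y) := by rw [commutatorKernel, abs_mul]; ring

theorem enorm_convol_mul_sub_mul_convol_le {ψ f g : ℝ → ℝ} {L : ℝ} (hψ : ContDiff ℝ 1 ψ)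
    (hf : ContDiff ℝ 1 f) (hfc : HasCompactSupport f) (hg : ContDiff ℝ 1 g)
    (hgL : ∀ y, |deriv g y| ≤ L) (x : ℝ) :
    ‖convol ψ (fun y => deriv f y * g y) x - g x * convol ψ (deriv f) x‖ₑ
      ≤ ENNReal.ofReal L *
        ((fun y => ‖f y‖ₑ) ⋆ₗ (fun u => ENNReal.ofReal (commutatorKernel ψ u))) x := by
  rw [convol_mul_sub_mul_convol_eq_integral hψ hf hfc hg, lconvolution_def,
    ← lintegral_const_mul' _ _ ENNReal.ofReal_ne_top]
  refine (enorm_integral_le_lintegral_enorm _).trans (lintegral_mono fun y => ?_)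
  rw [neg_add_eq_sub, enorm_mul, mul_left_comm,
    ← ENNReal.ofReal_mul ((abs_nonneg _).trans (hgL 0)),
    Real.enorm_eq_ofReal_abs (deriv ψ _ * _ - _)]
  gcongr
  exact abs_deriv_mul_sub_mul_deriv_le (hg.differentiable one_ne_zero) hgL x y

theorem commutatorKernel_dilation (φ : ℝ → ℝ) {δ : ℝ} (hδ : 0 < δ) (u : ℝ) :
    commutatorKernel (fun y => δ⁻¹ * φ (y / δ)) u = δ⁻¹ * commutatorKernel φ (u / δ) := by
  have hderiv : deriv (fun y => δ⁻¹ * φ (y / δ)) u = δ⁻¹ * (δ⁻¹ * deriv φ (u / δ)) := by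
    simp_rw [div_eq_inv_mul, deriv_const_mul_field', deriv_comp_mul_left, smul_eq_mul]
  simp only [commutatorKernel, hderiv, abs_mul, abs_div, abs_inv, abs_of_pos hδ]
  ring

theorem continuous_commutatorKernel {φ : ℝ → ℝ} (hφ : ContDiff ℝ 1 φ) :
    Continuous (commutatorKernel φ) :=
  (continuous_id.mul (hφ.continuous_deriv le_rfl)).abs.add hφ.continuous.abs

theorem integrable_commutatorKernel {φ : ℝ → ℝ} (hφ : ContDiff ℝ 1 φ)
    (hφc : HasCompactSupport φ) : Integrable (commutatorKernel φ) :=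
  (continuous_commutatorKernel hφ).integrable_of_hasCompactSupport
    (hφc.deriv.mul_left.abs.add hφc.abs)

theorem lintegral_commutatorKernel_dilation {φ : ℝ → ℝ} (hφ : ContDiff ℝ 1 φ)
    (hφc : HasCompactSupport φ) {δ : ℝ} (hδ : 0 < δ) :
    ∫⁻ u, ENNReal.ofReal (commutatorKernel (fun y => δ⁻¹ * φ (y / δ)) u)
      = ENNReal.ofReal (∫ u, commutatorKernel φ u) := by
  simp_rw [commutatorKernel_dilation φ hδ]
  rw [← ofReal_integral_eq_lintegral_ofReal
    (((integrable_commutatorKernel hφ hφc).comp_div hδ.ne').const_mul _)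
    (ae_of_all _ fun u => by unfold commutatorKernel; positivity)]
  rw [integral_const_mul, Measure.integral_comp_div, abs_of_pos hδ, smul_eq_mul,
    inv_mul_cancel_left₀ hδ.ne']

/-- Commutator estimate for mollifiers: with `φ_δ(x) = δ⁻¹ φ(x/δ)`, there is a constant
`C` depending only on `φ` with
`‖φ_δ * (f'·g) − g·(φ_δ * f')‖_{L²} ≤ C ‖g'‖_{L^∞} ‖f‖_{L²}`,
uniformly in `δ > 0`, `f` and `g`. -/
theorem mollifier_commutator (φ : ℝ → ℝ) (hφ : ContDiff ℝ (⊤ : ℕ∞) φ)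
    (hφc : HasCompactSupport φ) :
    ∃ C : ℝ, ∀ δ : ℝ, 0 < δ → ∀ f g : ℝ → ℝ,
      ContDiff ℝ 1 f → HasCompactSupport f →
      ContDiff ℝ 1 g → (∃ M : ℝ, ∀ x, |g x| ≤ M) →
      BddAbove (Set.range fun x => |deriv g x|) →
      eLpNorm (fun x => convol (fun y => δ⁻¹ * φ (y / δ)) (fun y => deriv f y * g y) x
          - g x * convol (fun y => δ⁻¹ * φ (y / δ)) (deriv f) x) 2 volume
        ≤ ENNReal.ofReal (C * (⨆ x : ℝ, |deriv g x|)) * eLpNorm f 2 volume := by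
  have hφ1 : ContDiff ℝ 1 φ := hφ.of_le (by exact_mod_cast le_top)
  have hC : 0 ≤ ∫ u, commutatorKernel φ u :=
    integral_nonneg fun u => by unfold commutatorKernel; positivity
  refine ⟨∫ u, commutatorKernel φ u, fun δ hδ f g hf hfc hg _ hg'_bdd => ?_⟩
  set L := ⨆ x, |deriv g x|
  set k : ℝ → ℝ≥0∞ := fun u => ENNReal.ofReal (commutatorKernel (fun y => δ⁻¹ * φ (y / δ)) u)
  set F : ℝ → ℝ≥0∞ := fun y => ‖f y‖ₑ
  have hφδ : ContDiff ℝ 1 fun y => δ⁻¹ * φ (y / δ) :=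
    contDiff_const.mul (hφ1.comp (contDiff_id.div_const δ))
  have hk : Measurable k := (continuous_commutatorKernel hφδ).measurable.ennreal_ofReal
  have hF : Measurable F := hf.continuous.measurable.enorm
  calc _ ≤ ENNReal.ofReal L * eLpNorm (F ⋆ₗ k) 2 volume :=
        eLpNorm_le_mul_eLpNorm_of_ae_le_mul' (ae_of_all _ fun x => by
          rw [enorm_eq_self]
          exact enorm_convol_mul_sub_mul_convol_le hφδ hf hfc hg (le_ciSup hg'_bdd) x) 2
    _ ≤ ENNReal.ofReal L * ((∫⁻ u, k u) * eLpNorm F 2 volume) := by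
        rw [lconvolution_comm]
        gcongr
        exact eLpNorm_lconvolution_le hk hF
    _ = _ := by
        rw [lintegral_commutatorKernel_dilation hφ1 hφc hδ, eLpNorm_enorm, ENNReal.ofReal_mul hC]
        ring
end

section
/- Let z : ℝ → ℝ² be twice continuously differentiable with z(α) − (α, 0) 2π-periodic, suppose its arc-chord constant F = sup_{α ∈ ℝ, 0 < |β| ≤ π} |β| / |z(α) − z(α−β)| is finite, and set M = sup_α |z'(α)| + sup_α |z''(α)|. Define, for α ∈ ℝ and 0 < |β| < π, C₁(α,β) = (z(α) − z(α−β))^⊥ / |z(α) − z(α−β)|² − z'(α)^⊥ / ( 2 |z'(α)|² tan(β/2) ). Then there exist universal constants C > 0 and j > 0, independent of z, such that |C₁(α,β)| ≤ C (1 + F)^j (1 + M)^j for all such α, β. -/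
/-!
With `Δ = z α - z (α - β)` and `v = 2 tan (β / 2) • z' α`, both kernels have the form
`i w / |w|² = i / conj w`, so `|C₁| = |Δ - v| / (|Δ| |v|)`. The arc-chord condition gives
`|β| ≤ F |Δ|` and, as `β → 0`, `1 ≤ F |z' α|`; with `|tan x| ≥ |x|` also `|β| ≤ F |v|`.
For `|β| ≤ 1`, Taylor's formula and `tan x = x + O(x²)` give `|Δ - v| ≤ (M₁ + M₂) β²`, hence
`|C₁| ≤ (M₁ + M₂) F²`; for `|β| > 1` the triangle inequality gives `|C₁| ≤ 1/|Δ| + 1/|v| ≤ 2F`.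
-/

open Real Filter Topology ComplexConjugate

namespace Real

lemma abs_tan_sub_le_sq_of_nonneg {x : ℝ} (hx₀ : 0 ≤ x) (hx : x ≤ 1 / 2) :
    |tan x - x| ≤ x ^ 2 := by
  have hcos : 1 - x ^ 2 / 2 ≤ cos x := one_sub_sq_div_two_le_cos
  have hcos_pos : 0 < 1 - x ^ 2 / 2 := by nlinarith
  rw [abs_of_nonneg (sub_nonneg.2 (le_tan hx₀ (by linarith [pi_gt_three]))),
    tan_eq_sin_div_cos, sub_le_iff_le_add, div_le_iff₀ (hcos_pos.trans_le hcos)]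
  calc sin x ≤ x := sin_le hx₀
    _ ≤ (x ^ 2 + x) * (1 - x ^ 2 / 2) := by nlinarith [mul_nonneg (sq_nonneg x) hx₀]
    _ ≤ (x ^ 2 + x) * cos x := by gcongr

lemma abs_tan_sub_le_sq {x : ℝ} (hx : |x| ≤ 1 / 2) : |tan x - x| ≤ x ^ 2 := by
  rcases le_total 0 x with hx₀ | hx₀
  · exact abs_tan_sub_le_sq_of_nonneg hx₀ (by rwa [abs_of_nonneg hx₀] at hx)
  · have h := abs_tan_sub_le_sq_of_nonneg (neg_nonneg.2 hx₀) (by rwa [abs_of_nonpos hx₀] at hx)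
    rwa [tan_neg, neg_sub_neg, abs_sub_comm, neg_sq] at h

lemma abs_le_abs_tan {x : ℝ} (hx : |x| < π / 2) : |x| ≤ |tan x| := by
  rcases le_total 0 x with hx₀ | hx₀
  · rw [abs_of_nonneg hx₀] at hx ⊢
    exact (le_tan hx₀ hx).trans (le_abs_self _)
  · rw [abs_of_nonpos hx₀] at hx ⊢
    simpa [tan_neg] using (le_tan (neg_nonneg.2 hx₀) hx).trans (le_abs_self _)

end Real

section

variable {E : Type*} [NormedAddCommGroup E] [NormedSpace ℝ E] {f : ℝ → E}

lemma norm_sub_sub_smul_deriv_le {M : ℝ} (hf : ContDiff ℝ 2 f) (hM : ∀ x, ‖deriv (deriv f) x‖ ≤ M)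
    (x y : ℝ) : ‖f x - f y - (x - y) • deriv f x‖ ≤ M * (x - y) ^ 2 := by
  have hM₀ : 0 ≤ M := (norm_nonneg _).trans (hM x)
  have hlip : ∀ s, ‖deriv f s - deriv f x‖ ≤ M * ‖s - x‖ := fun s =>
    Convex.norm_image_sub_le_of_norm_deriv_le (fun s _ => hf.differentiable_deriv_two s)
      (fun s _ => hM s) convex_univ (Set.mem_univ x) (Set.mem_univ s)
  have hg : ∀ s ∈ Set.uIcc x y, HasDerivWithinAt (fun s => f s - s • deriv f x)
      (deriv f s - deriv f x) (Set.uIcc x y) s := fun s _ =>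
    ((hf.differentiable two_ne_zero s).hasDerivAt.sub
      ((hasDerivAt_id s).smul_const (deriv f x) |>.congr_deriv (one_smul ℝ _))).hasDerivWithinAt
  have hbound : ∀ s ∈ Set.uIcc x y, ‖deriv f s - deriv f x‖ ≤ M * |x - y| := fun s hs =>
    (hlip s).trans (mul_le_mul_of_nonneg_left
      (by rw [Real.norm_eq_abs, abs_sub_comm x y]; exact Set.abs_sub_left_of_mem_uIcc hs) hM₀)
  have hmvt := (convex_uIcc x y).norm_image_sub_le_of_norm_hasDerivWithin_le hg hbound
    Set.left_mem_uIcc Set.right_mem_uIcc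
  calc ‖f x - f y - (x - y) • deriv f x‖
      = ‖(f y - y • deriv f x) - (f x - x • deriv f x)‖ := by
        rw [← norm_neg, sub_smul]; congr 1; abel
    _ ≤ M * |x - y| * ‖y - x‖ := hmvt
    _ = M * (x - y) ^ 2 := by rw [Real.norm_eq_abs, abs_sub_comm y x, mul_assoc, ← sq, sq_abs]


lemma norm_sub_sub_two_mul_tan_half_smul_deriv_le {M₁ M₂ : ℝ} (hf : ContDiff ℝ 2 f)
    (hM₂ : ∀ x, ‖deriv (deriv f) x‖ ≤ M₂) {x β : ℝ} (hM₁ : ‖deriv f x‖ ≤ M₁) (hβ : |β| ≤ 1) :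
    ‖f x - f (x - β) - (2 * tan (β / 2)) • deriv f x‖ ≤ (M₁ + M₂) * β ^ 2 := by
  have htan : |β - 2 * tan (β / 2)| ≤ β ^ 2 / 2 := by
    have h := abs_tan_sub_le_sq (x := β / 2) (by rw [abs_div, abs_two]; linarith)
    rw [show β - 2 * tan (β / 2) = -(2 * (tan (β / 2) - β / 2)) by ring, abs_neg, abs_mul,
      abs_two]
    linarith
  have htaylor := norm_sub_sub_smul_deriv_le hf hM₂ x (x - β)
  rw [sub_sub_cancel] at htaylor
  have hM₁₀ : 0 ≤ M₁ := (norm_nonneg _).trans hM₁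
  calc ‖f x - f (x - β) - (2 * tan (β / 2)) • deriv f x‖
      = ‖(f x - f (x - β) - β • deriv f x) + (β - 2 * tan (β / 2)) • deriv f x‖ := by
        rw [sub_smul]; congr 1; abel
    _ ≤ M₂ * β ^ 2 + β ^ 2 / 2 * M₁ := by
        refine (norm_add_le _ _).trans (add_le_add htaylor ?_)
        rw [norm_smul, Real.norm_eq_abs]
        exact mul_le_mul htan hM₁ (norm_nonneg _) (by positivity)
    _ ≤ (M₁ + M₂) * β ^ 2 := by nlinarith [mul_nonneg hM₁₀ (sq_nonneg β)]

lemma HasDerivAt.one_le_mul_norm_of_le_mul_norm_sub {f' : E} {x F : ℝ} (hf : HasDerivAt f f' x)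
    (harc : ∀ᶠ t in 𝓝[>] 0, t ≤ F * ‖f (x + t) - f x‖) : 1 ≤ F * ‖f'‖ := by
  refine ge_of_tendsto (hf.tendsto_slope_zero_right.norm.const_mul F) ?_
  filter_upwards [harc, self_mem_nhdsWithin] with t ht (htpos : 0 < t)
  rwa [norm_smul, norm_inv, Real.norm_eq_abs, abs_of_pos htpos, mul_left_comm,
    one_le_inv_mul₀ htpos]

lemma abs_le_mul_norm_two_mul_tan_half_smul {u : E} {F β : ℝ} (hu : 1 ≤ F * ‖u‖)
    (hβ : |β| < π) : |β| ≤ F * ‖(2 * tan (β / 2)) • u‖ := by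
  have htan : |β| ≤ |2 * tan (β / 2)| := by
    have h := abs_le_abs_tan (x := β / 2) (by rw [abs_div, abs_two]; linarith)
    rw [abs_div, abs_two] at h
    rw [abs_mul, abs_two]
    linarith
  calc |β| ≤ |β| * (F * ‖u‖) := le_mul_of_one_le_right (abs_nonneg β) hu
    _ ≤ |2 * tan (β / 2)| * (F * ‖u‖) := by gcongr
    _ = F * ‖(2 * tan (β / 2)) • u‖ := by rw [norm_smul, Real.norm_eq_abs]; ring

end

namespace Complex

lemma div_ofReal_mul_norm_sq (c : ℝ) (u : ℂ) :
    u / ((c * ‖u‖ ^ 2 : ℝ) : ℂ) = conj ((c • u)⁻¹) := by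
  rw [map_inv₀, real_smul, map_mul, conj_ofReal, mul_inv, inv_def (conj u), conj_conj,
    normSq_conj, normSq_eq_norm_sq]
  push_cast
  ring

lemma norm_I_mul_div_sub_I_mul_div {w u : ℂ} {c : ℝ} (hw : w ≠ 0) (hu : c • u ≠ 0) :
    ‖I * w / ((‖w‖ ^ 2 : ℝ) : ℂ) - I * u / ((c * ‖u‖ ^ 2 : ℝ) : ℂ)‖
      = ‖w - c • u‖ / (‖w‖ * ‖c • u‖) := by
  have hw' : w / ((‖w‖ ^ 2 : ℝ) : ℂ) = conj w⁻¹ := by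
    simpa using div_ofReal_mul_norm_sq 1 w
  rw [mul_div_assoc, mul_div_assoc, hw', div_ofReal_mul_norm_sq, ← mul_sub, norm_mul, norm_I,
    one_mul, ← map_sub, norm_conj, ← dist_eq_norm, dist_inv_inv₀ hw hu, dist_eq_norm]

end Complex

section

variable {E : Type*} [SeminormedAddCommGroup E] {w v : E} {c F : ℝ}

lemma norm_pos_of_le_mul_norm (hc : 0 < c) (hw : c ≤ F * ‖w‖) : 0 < ‖w‖ := by
  have hFw : 0 < F * ‖w‖ := hc.trans_le hw
  exact pos_of_mul_pos_right hFw (pos_of_mul_pos_left hFw (norm_nonneg w)).le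

lemma norm_sub_div_norm_mul_norm_le_of_sq {K : ℝ} (hc : 0 < c) (hw : c ≤ F * ‖w‖)
    (hv : c ≤ F * ‖v‖) (h : ‖w - v‖ ≤ K * c ^ 2) : ‖w - v‖ / (‖w‖ * ‖v‖) ≤ K * F ^ 2 := by
  have hK : 0 ≤ K := nonneg_of_mul_nonneg_left ((norm_nonneg _).trans h) (by positivity)
  rw [div_le_iff₀ (mul_pos (norm_pos_of_le_mul_norm hc hw) (norm_pos_of_le_mul_norm hc hv))]
  calc ‖w - v‖ ≤ K * c ^ 2 := h
    _ ≤ K * ((F * ‖w‖) * (F * ‖v‖)) := by gcongr; nlinarith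
    _ = K * F ^ 2 * (‖w‖ * ‖v‖) := by ring

lemma norm_sub_div_norm_mul_norm_le (hc : 0 < c) (hw : c ≤ F * ‖w‖) (hv : c ≤ F * ‖v‖) :
    ‖w - v‖ / (‖w‖ * ‖v‖) ≤ 2 * F / c := by
  have hw₀ := norm_pos_of_le_mul_norm hc hw
  have hv₀ := norm_pos_of_le_mul_norm hc hv
  rw [div_le_div_iff₀ (mul_pos hw₀ hv₀) hc]
  nlinarith [norm_sub_le w v]

end

/-- The kernel `C₁` of the paper's Appendix: the difference between the Birkhoff–Rott
kernel of the curve `z` (identifying `ℝ²` with `ℂ`, with `w^⊥ = I·w`) and the cotangent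
kernel of the periodic Hilbert transform. It is bounded in terms of the arc-chord
constant `F` and the `C²` size `M = M₁ + M₂` of `z`, with universal constants `C, j`. -/
theorem birkhoffRott_kernel_bound :
    ∃ (C : ℝ) (j : ℕ), 0 < C ∧ 0 < j ∧
      ∀ (z : ℝ → ℂ) (F M₁ M₂ : ℝ),
        ContDiff ℝ 2 z →
        Function.Periodic (fun α : ℝ => z α - α) (2 * π) →
        (∀ α β : ℝ, 0 < |β| → |β| ≤ π → |β| ≤ F * ‖z α - z (α - β)‖) →
        (∀ α : ℝ, ‖deriv z α‖ ≤ M₁) →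
        (∀ α : ℝ, ‖deriv (deriv z) α‖ ≤ M₂) →
        ∀ α β : ℝ, 0 < |β| → |β| < π →
          ‖(Complex.I * (z α - z (α - β)) /
                  ((‖z α - z (α - β)‖ ^ 2 : ℝ) : ℂ) -
                Complex.I * deriv z α /
                  ((2 * ‖deriv z α‖ ^ 2 * Real.tan (β / 2) : ℝ) : ℂ))‖
            ≤ C * (1 + F) ^ j * (1 + (M₁ + M₂)) ^ j := by
  refine ⟨1, 2, one_pos, two_pos, fun z F M₁ M₂ hz _ harc hM₁ hM₂ α β hβ₀ hβπ => ?_⟩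
  set Δ := z α - z (α - β)
  set v := (2 * tan (β / 2)) • deriv z α
  have hspeed : 1 ≤ F * ‖deriv z α‖ := by
    refine (hz.differentiable two_ne_zero α).hasDerivAt.one_le_mul_norm_of_le_mul_norm_sub ?_
    filter_upwards [Ioc_mem_nhdsGT pi_pos] with t ⟨ht₀, htπ⟩
    simpa [abs_of_pos ht₀] using harc (α + t) t (abs_pos.2 ht₀.ne') (by rwa [abs_of_pos ht₀])
  have hF : 0 < F := pos_of_mul_pos_left (one_pos.trans_le hspeed) (norm_nonneg _)
  have hΔ : |β| ≤ F * ‖Δ‖ := harc α β hβ₀ hβπ.le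
  have hv : |β| ≤ F * ‖v‖ := abs_le_mul_norm_two_mul_tan_half_smul hspeed hβπ
  have hM : 0 ≤ M₁ + M₂ :=
    add_nonneg ((norm_nonneg _).trans (hM₁ α)) ((norm_nonneg _).trans (hM₂ α))
  rw [show 2 * ‖deriv z α‖ ^ 2 * tan (β / 2) = 2 * tan (β / 2) * ‖deriv z α‖ ^ 2 by ring,
    Complex.norm_I_mul_div_sub_I_mul_div (norm_pos_iff.1 (norm_pos_of_le_mul_norm hβ₀ hΔ))
      (norm_pos_iff.1 (norm_pos_of_le_mul_norm hβ₀ hv))]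
  change ‖Δ - v‖ / (‖Δ‖ * ‖v‖) ≤ _
  rw [one_mul]
  rcases le_or_gt |β| 1 with hsmall | hlarge
  · have hnum : ‖Δ - v‖ ≤ (M₁ + M₂) * |β| ^ 2 := by
      rw [sq_abs]; exact norm_sub_sub_two_mul_tan_half_smul_deriv_le hz hM₂ (hM₁ α) hsmall
    calc ‖Δ - v‖ / (‖Δ‖ * ‖v‖) ≤ (M₁ + M₂) * F ^ 2 :=
          norm_sub_div_norm_mul_norm_le_of_sq hβ₀ hΔ hv hnum
      _ ≤ (1 + F) ^ 2 * (1 + (M₁ + M₂)) ^ 2 := by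
          rw [mul_comm]; exact mul_le_mul (by nlinarith) (by nlinarith) hM (by positivity)
  · calc ‖Δ - v‖ / (‖Δ‖ * ‖v‖) ≤ 2 * F / 1 :=
          norm_sub_div_norm_mul_norm_le one_pos (hlarge.le.trans hΔ) (hlarge.le.trans hv)
      _ ≤ (1 + F) ^ 2 * (1 + (M₁ + M₂)) ^ 2 := by
          rw [div_one]
          nlinarith [sq_nonneg (1 - F), one_le_pow₀ (n := 2) (by linarith : 1 ≤ 1 + (M₁ + M₂))]
end
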